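/- arXiv:1905.00303 — 2 statements merged into one kernel-verified Lean document; each statement's English description precedes it below -/
import Mathlib

section
/- The projection $K_1 \times \cdots \times K_m \to K_1 \times \cdots \times K_{m-1}$ forgetting the last coordinate descends to a well-defined surjective map $p : F_m^\varphi \to F_{m-1}^\varphi$ on orbit spaces, $p([g_1,\dots,g_m]) = [g_1,\dots,g_{m-1}]$, and for every point $x \in F_{m-1}^\varphi$ the fiber $p^{-1}(x)$ is in bijection with the left coset space $K_m / Z_m$. -/
/-!
Because each `T ℓ` is abelian, the twisted formula is a genuine right action of `∏ Z_j`, so two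
tuples lie in the same orbit exactly when one is carried to the other by a single `z`.
The correction factor in coordinate `ℓ` only involves `z_j` for `j < ℓ`; hence the action commutes
with dropping the last coordinate, which gives the projection `p`. An element `z` fixing the first
`m - 1` coordinates of a tuple is trivial there by induction on the coordinate, so inside a fiber
it only multiplies the last coordinate on the right by `z_m`: the fiber over `[g']` is
`{[g', k]}` with `[g', k] = [g', k']` iff `k Z_m = k' Z_m`.
-/

/-- The "correction factor" appearing in the `ℓ`-th component of the right action of
`Z₁ × ⋯ × Zₘ` on `K₁ × ⋯ × Kₘ`: the product `∏_{j < ℓ} φⱼ^{(ℓ)}(zⱼ)⁻¹`, taken inside `K ℓ`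
(in increasing order of `j`; the factors lie in the abelian subgroup `T ℓ`). -/
def bottCorr {m : ℕ} (K : Fin m → Type*) [∀ j, Group (K j)]
    (Z T : ∀ j, Subgroup (K j))
    (φ : ∀ j l : Fin m, j < l → (↥(Z j) →* ↥(T l)))
    (z : ∀ j, Z j) (l : Fin m) : K l :=
  (((List.finRange m).map
    (fun j => if h : j < l then (((φ j l h (z j) : T l) : K l))⁻¹ else 1)).prod)

/-- The right action of `Z₁ × ⋯ × Zₘ` on `K₁ × ⋯ × Kₘ`:
`(g ⬝ z) ℓ = (∏_{j<ℓ} φⱼ^{(ℓ)}(zⱼ)⁻¹) · g_ℓ · z_ℓ`. -/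
def bottAct {m : ℕ} (K : Fin m → Type*) [∀ j, Group (K j)]
    (Z T : ∀ j, Subgroup (K j))
    (φ : ∀ j l : Fin m, j < l → (↥(Z j) →* ↥(T l)))
    (g : ∀ j, K j) (z : ∀ j, Z j) : ∀ j, K j :=
  fun l => bottCorr K Z T φ z l * g l * (z l : K l)


/-- The orbit relation of the right `Z₁ × ⋯ × Zₘ`-action on `K₁ × ⋯ × Kₘ`. -/
def bottRel {m : ℕ} (K : Fin m → Type*) [∀ j, Group (K j)]
    (Z T : ∀ j, Subgroup (K j))
    (φ : ∀ j l : Fin m, j < l → (↥(Z j) →* ↥(T l))) :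
    (∀ j, K j) → (∀ j, K j) → Prop :=
  fun g g' => ∃ z : ∀ j, Z j, bottAct K Z T φ g z = g'

open Function

section Action

variable {m : ℕ} (K : Fin m → Type*) [∀ j, Group (K j)] (Z T : ∀ j, Subgroup (K j))
  (φ : ∀ j l : Fin m, j < l → (↥(Z j) →* ↥(T l)))

lemma bottCorr_eq_one {z : ∀ j, Z j} {l : Fin m} (h : ∀ j < l, z j = 1) :
    bottCorr K Z T φ z l = 1 := by
  refine List.prod_eq_one fun x hx => ?_
  obtain ⟨j, -, rfl⟩ := List.mem_map.mp hx
  split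
  next hj => simp [h j hj]
  · rfl

lemma bottCorr_eq_coe_prod (z : ∀ j, Z j) (l : Fin m) :
    bottCorr K Z T φ z l =
      (((List.finRange m).map fun j => if h : j < l then (φ j l h (z j))⁻¹ else 1).prod : T l) := by
  rw [bottCorr, SubmonoidClass.coe_list_prod, List.map_map]
  refine congrArg List.prod (List.map_congr_left fun j _ => ?_)
  by_cases h : j < l <;> simp [h]

lemma bottCorr_mul (hT : ∀ l, ∀ a b : ↥(T l), a * b = b * a) (z w : ∀ j, Z j) (l : Fin m) :
    bottCorr K Z T φ (z * w) l = bottCorr K Z T φ w l * bottCorr K Z T φ z l := by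
  let : CommGroup (T l) := { mul_comm := hT l }
  rw [bottCorr_eq_coe_prod, bottCorr_eq_coe_prod, bottCorr_eq_coe_prod, ← Subgroup.coe_mul,
    ← List.prod_map_mul]
  refine congrArg _ (congrArg List.prod (List.map_congr_left fun j _ => ?_))
  by_cases h : j < l <;> simp [h, mul_comm]

lemma bottAct_one (g : ∀ j, K j) : bottAct K Z T φ g 1 = g := by
  funext l
  rw [bottAct, bottCorr_eq_one K Z T φ (z := 1) fun _ _ => rfl]
  simp

lemma bottAct_mul (hT : ∀ l, ∀ a b : ↥(T l), a * b = b * a) (g : ∀ j, K j) (z w : ∀ j, Z j) :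
    bottAct K Z T φ (bottAct K Z T φ g z) w = bottAct K Z T φ g (z * w) := by
  funext l
  simp [bottAct, bottCorr_mul K Z T φ hT, mul_assoc]

lemma bottRel_equivalence (hT : ∀ l, ∀ a b : ↥(T l), a * b = b * a) :
    Equivalence (bottRel K Z T φ) where
  refl g := ⟨1, bottAct_one K Z T φ g⟩
  symm := by
    rintro g _ ⟨z, rfl⟩
    exact ⟨z⁻¹, by rw [bottAct_mul K Z T φ hT, mul_inv_cancel, bottAct_one]⟩
  trans := by
    rintro g _ _ ⟨z, rfl⟩ ⟨w, rfl⟩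
    exact ⟨z * w, (bottAct_mul K Z T φ hT g z w).symm⟩

lemma exists_bottAct_eq_of_mk_eq (hT : ∀ l, ∀ a b : ↥(T l), a * b = b * a) {g g' : ∀ j, K j}
    (h : Quot.mk (bottRel K Z T φ) g = Quot.mk _ g') : ∃ z, bottAct K Z T φ g z = g' :=
  (bottRel_equivalence K Z T φ hT).eqvGen_iff.mp (Quot.eqvGen_exact h)

lemma eq_one_of_bottAct_eq_of_lt {g : ∀ j, K j} {z : ∀ j, Z j} {l : Fin m}
    (h : ∀ j < l, bottAct K Z T φ g z j = g j) : ∀ j < l, z j = 1 := by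
  intro j
  induction j using WellFoundedLT.induction with
  | ind j ih =>
    intro hjl
    have hcorr : bottCorr K Z T φ z j = 1 :=
      bottCorr_eq_one K Z T φ fun i hij => ih i hij (hij.trans hjl)
    have hj := h j hjl
    rw [bottAct, hcorr, one_mul, mul_eq_left] at hj
    exact Subtype.ext hj

end Action

section Projection

variable {n : ℕ} (K : Fin (n + 1) → Type*) [∀ j, Group (K j)] (Z T : ∀ j, Subgroup (K j))
  (φ : ∀ j l : Fin (n + 1), j < l → (↥(Z j) →* ↥(T l)))

lemma bottCorr_init (z : ∀ j, Z j) (l : Fin n) :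
    bottCorr (fun j : Fin n => K j.castSucc) (fun j => Z j.castSucc) (fun j => T j.castSucc)
        (fun j l h => φ j.castSucc l.castSucc (Fin.castSucc_lt_castSucc_iff.mpr h))
        (Fin.init z) l =
      bottCorr K Z T φ z l.castSucc := by
  have hlast : ¬ Fin.last n < l.castSucc := not_lt.mpr (Fin.castSucc_lt_last l).le
  rw [bottCorr, bottCorr, List.finRange_succ_last, List.map_append, List.prod_append,
    List.map_map]
  simp only [List.map_cons, List.map_nil, List.prod_cons, List.prod_nil, dif_neg hlast,
    mul_one]
  refine congrArg List.prod (List.map_congr_left fun j _ => ?_)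
  by_cases h : j < l <;> simp [h, Fin.init]

lemma init_bottAct (g : ∀ j, K j) (z : ∀ j, Z j) :
    Fin.init (bottAct K Z T φ g z) =
      bottAct (fun j : Fin n => K j.castSucc) (fun j => Z j.castSucc) (fun j => T j.castSucc)
        (fun j l h => φ j.castSucc l.castSucc (Fin.castSucc_lt_castSucc_iff.mpr h))
        (Fin.init g) (Fin.init z) := by
  funext l
  simp only [Fin.init, bottAct, ← bottCorr_init K Z T φ z l]

lemma bottAct_mulSingle_last (g : ∀ j, K j) (z : Z (Fin.last n)) :
    bottAct K Z T φ g (Pi.mulSingle (Fin.last n) z) =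
      update g (Fin.last n) (g (Fin.last n) * z) := by
  funext l
  have hcorr : bottCorr K Z T φ (Pi.mulSingle (Fin.last n) z) l = 1 :=
    bottCorr_eq_one K Z T φ fun j hjl =>
      Pi.mulSingle_eq_of_ne (M := fun j => Z j) (Fin.ne_last_of_lt (hjl.trans_le (Fin.le_last l))) z
  rw [bottAct, hcorr, one_mul]
  by_cases hl : l = Fin.last n
  · subst hl
    simp
  · simp [hl]

/-- The projection `p : F_m^φ → F_{m-1}^φ`. -/
def bottProj :
    Quot (bottRel K Z T φ) →
      Quot (bottRel (fun j : Fin n => K j.castSucc) (fun j => Z j.castSucc)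
        (fun j => T j.castSucc)
        (fun j l h => φ j.castSucc l.castSucc (Fin.castSucc_lt_castSucc_iff.mpr h))) :=
  Quot.lift (fun g => Quot.mk _ (Fin.init g)) <| by
    rintro g _ ⟨z, rfl⟩
    exact Quot.sound ⟨Fin.init z, (init_bottAct K Z T φ g z).symm⟩

lemma bottProj_mk_snoc (g' : ∀ j : Fin n, K j.castSucc) (k : K (Fin.last n)) :
    bottProj K Z T φ (Quot.mk _ (Fin.snoc g' k)) = Quot.mk _ g' := by
  simp [bottProj, Fin.init_snoc]

lemma bottProj_surjective : Surjective (bottProj K Z T φ) := by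
  rintro ⟨g'⟩
  exact ⟨_, bottProj_mk_snoc K Z T φ g' 1⟩

def bottProjFiberMap (g' : ∀ j : Fin n, K j.castSucc) :
    K (Fin.last n) ⧸ Z (Fin.last n) → {y // bottProj K Z T φ y = Quot.mk _ g'} :=
  Quotient.lift (fun k => ⟨Quot.mk _ (Fin.snoc g' k), bottProj_mk_snoc K Z T φ g' k⟩) <| by
    intro k k' hk
    refine Subtype.ext (Quot.sound ⟨Pi.mulSingle (Fin.last n) ⟨k⁻¹ * k', ?_⟩, ?_⟩)
    · exact QuotientGroup.leftRel_apply.mp hk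
    · simp [bottAct_mulSingle_last, Fin.update_snoc_last]

lemma bottProjFiberMap_injective (hT : ∀ l, ∀ a b : ↥(T l), a * b = b * a)
    (g' : ∀ j : Fin n, K j.castSucc) : Injective (bottProjFiberMap K Z T φ g') := by
  rintro ⟨k⟩ ⟨k'⟩ h
  obtain ⟨z, hz⟩ := exists_bottAct_eq_of_mk_eq K Z T φ hT (congrArg Subtype.val h)
  have hinit : ∀ j < Fin.last n, bottAct K Z T φ (Fin.snoc g' k) z j = Fin.snoc g' k j := by
    intro j hj
    obtain ⟨j, rfl⟩ := Fin.exists_castSucc_eq.mpr hj.ne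
    simp [hz]
  have hcorr : bottCorr K Z T φ z (Fin.last n) = 1 :=
    bottCorr_eq_one K Z T φ (eq_one_of_bottAct_eq_of_lt K Z T φ hinit)
  have hlast := congrFun hz (Fin.last n)
  rw [bottAct, hcorr, one_mul, Fin.snoc_last, Fin.snoc_last] at hlast
  refine QuotientGroup.eq.mpr ?_
  rw [← hlast, inv_mul_cancel_left]
  exact (z (Fin.last n)).2

lemma bottProjFiberMap_surjective (hT : ∀ l, ∀ a b : ↥(T l), a * b = b * a)
    (g' : ∀ j : Fin n, K j.castSucc) : Surjective (bottProjFiberMap K Z T φ g') := by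
  rintro ⟨⟨g⟩, hg⟩
  obtain ⟨z', hz'⟩ := exists_bottAct_eq_of_mk_eq _ _ _ _ (fun l => hT l.castSucc) hg
  have hact : bottAct K Z T φ g (Fin.snoc z' 1) =
      Fin.snoc g' (bottAct K Z T φ g (Fin.snoc z' 1) (Fin.last n)) := by
    conv_lhs => rw [← Fin.snoc_init_self (bottAct K Z T φ g _), init_bottAct, Fin.init_snoc]
    rw [hz']
  exact ⟨QuotientGroup.mk _, Subtype.ext (Quot.sound ⟨_, hact⟩).symm⟩
end Projection

/-- forgetting the last coordinate descends to a well-defined surjection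
`p : F_m^φ → F_{m-1}^φ` on orbit spaces, and every fiber of `p` is in bijection with the
left coset space `K_m / Z_m`. -/
theorem bott_projection_fiber {n : ℕ} (K : Fin (n + 1) → Type*) [∀ j, Group (K j)]
    (Z T : ∀ j, Subgroup (K j))
    (hT : ∀ l : Fin (n + 1), ∀ a b : ↥(T l), a * b = b * a)
    (φ : ∀ j l : Fin (n + 1), j < l → (↥(Z j) →* ↥(T l))) :
    ∃ p : Quot (bottRel K Z T φ) →
        Quot (bottRel (fun j : Fin n => K j.castSucc) (fun j => Z j.castSucc)
          (fun j => T j.castSucc)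
          (fun j l h => φ j.castSucc l.castSucc (Fin.castSucc_lt_castSucc_iff.mpr h))),
      (∀ g : ∀ j, K j,
          p (Quot.mk _ g) = Quot.mk _ (fun j : Fin n => g j.castSucc)) ∧
      Function.Surjective p ∧
      (∀ x, Nonempty ({y // p y = x} ≃ (K (Fin.last n) ⧸ Z (Fin.last n)))) := by
  refine ⟨bottProj K Z T φ, fun g => rfl, bottProj_surjective K Z T φ, ?_⟩
  rintro ⟨g'⟩
  exact ⟨(Equiv.ofBijective _ ⟨bottProjFiberMap_injective K Z T φ hT g',
    bottProjFiberMap_surjective K Z T φ hT g'⟩).symm⟩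
end

section
/- The commutative rings $\mathbb{Z}[u, y] / \langle u^2 - y^2 \rangle$ and $\mathbb{Z}[u, v] / \langle u v \rangle$ are not isomorphic as rings; that is, there is no ring isomorphism between the quotient of the polynomial ring in two variables over $\mathbb{Z}$ by the principal ideal generated by $u^2 - y^2$ and the quotient of the polynomial ring in two variables over $\mathbb{Z}$ by the principal ideal generated by $uv$. -/
open MvPolynomial


private lemma two_eq_zero_mv : (2 : MvPolynomial (Fin 2) (ZMod 2)) = 0 := by
  have : ((2:ℕ) : MvPolynomial (Fin 2) (ZMod 2)) = C ((2:ℕ) : ZMod 2) := by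
    rw [MvPolynomial.C_eq_coe_nat]
  norm_num at this
  rw [this, show (2 : ZMod 2) = 0 from rfl, map_zero]

private lemma primeX0' : Prime (X 0 : MvPolynomial (Fin 1) (ZMod 2)) := by
  rw [← MulEquiv.prime_iff (MvPolynomial.finSuccEquiv (ZMod 2) 0).toMulEquiv]
  have : (MvPolynomial.finSuccEquiv (ZMod 2) 0).toMulEquiv (X 0) = Polynomial.X := by
    simpa using MvPolynomial.finSuccEquiv_X_zero (R := ZMod 2) (n := 0)
  rw [this]; exact Polynomial.prime_X

private lemma primeX0 : Prime (X 0 : MvPolynomial (Fin 2) (ZMod 2)) := by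
  rw [← MulEquiv.prime_iff (MvPolynomial.finSuccEquiv (ZMod 2) 1).toMulEquiv]
  have : (MvPolynomial.finSuccEquiv (ZMod 2) 1).toMulEquiv (X 0) = Polynomial.X := by
    simpa using MvPolynomial.finSuccEquiv_X_zero (R := ZMod 2) (n := 1)
  rw [this]; exact Polynomial.prime_X

private lemma primeX1 : Prime (X 1 : MvPolynomial (Fin 2) (ZMod 2)) := by
  rw [← MulEquiv.prime_iff (MvPolynomial.finSuccEquiv (ZMod 2) 1).toMulEquiv]
  have : (MvPolynomial.finSuccEquiv (ZMod 2) 1).toMulEquiv (X 1) = Polynomial.C (X 0) := by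
    simpa using MvPolynomial.finSuccEquiv_X_succ (R := ZMod 2) (n := 1) (j := 0)
  rw [this, Polynomial.prime_C_iff]; exact primeX0'

private lemma X1_not_dvd_X0 : ¬ (X 1 : MvPolynomial (Fin 2) (ZMod 2)) ∣ X 0 := by
  rintro ⟨s, hs⟩
  have := congrArg (eval (fun i : Fin 2 => if i = 0 then 1 else 0)) hs
  simp at this

private lemma lemB (p q : MvPolynomial (Fin 2) ℤ)
    (h : (X 0 : MvPolynomial (Fin 2) ℤ) * X 1 ∣ p ^ 2 - 2 * q) :
    ∃ w t, p = 2 * w + (X 0 * X 1) * t := by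
  obtain ⟨r, hr⟩ := h
  have h2 : (MvPolynomial.map (Int.castRingHom (ZMod 2))) p ^ 2
      = (X 0 * X 1) * (MvPolynomial.map (Int.castRingHom (ZMod 2))) r := by
    have h3 := congrArg (MvPolynomial.map (Int.castRingHom (ZMod 2))) hr
    simp only [map_sub, map_mul, map_pow, map_ofNat, MvPolynomial.map_X] at h3
    rw [two_eq_zero_mv, zero_mul, sub_zero] at h3
    exact h3
  have hx0 : (X 0 : MvPolynomial (Fin 2) (ZMod 2)) ∣ (MvPolynomial.map (Int.castRingHom (ZMod 2))) p :=
    primeX0.dvd_of_dvd_pow ⟨X 1 * (MvPolynomial.map (Int.castRingHom (ZMod 2))) r, by rw [h2]; ring⟩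
  obtain ⟨s, hs⟩ := hx0
  have hx1 : (X 1 : MvPolynomial (Fin 2) (ZMod 2)) ∣ s := by
    have h1 : (X 1 : MvPolynomial (Fin 2) (ZMod 2)) ∣ (MvPolynomial.map (Int.castRingHom (ZMod 2))) p :=
      primeX1.dvd_of_dvd_pow ⟨X 0 * (MvPolynomial.map (Int.castRingHom (ZMod 2))) r, by rw [h2]; ring⟩
    rcases (primeX1.dvd_mul.mp (hs ▸ h1)) with h | h
    · exact absurd h X1_not_dvd_X0
    · exact h
  obtain ⟨t', ht'⟩ := hx1
  have hFp : (MvPolynomial.map (Int.castRingHom (ZMod 2))) p = (X 0 * X 1) * t' := by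
    rw [hs, ht']; ring
  obtain ⟨t, ht⟩ := MvPolynomial.map_surjective (Int.castRingHom (ZMod 2))
    (fun x => ⟨x.val, by simp [ZMod.intCast_zmod_cast]⟩) t'
  have hzero : (MvPolynomial.map (Int.castRingHom (ZMod 2))) (p - (X 0 * X 1) * t) = 0 := by
    rw [map_sub, hFp, map_mul, map_mul, MvPolynomial.map_X, MvPolynomial.map_X, ht, sub_self]
  have hdvd : (C 2 : MvPolynomial (Fin 2) ℤ) ∣ p - (X 0 * X 1) * t := by
    rw [C_dvd_iff_dvd_coeff]
    intro i
    have hc := congrArg (fun φ => MvPolynomial.coeff i φ) hzero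
    simp only [MvPolynomial.coeff_map, MvPolynomial.coeff_zero] at hc
    exact (ZMod.intCast_zmod_eq_zero_iff_dvd _ 2).mp hc
  obtain ⟨w, hw⟩ := hdvd
  refine ⟨w, t, ?_⟩
  have hC2 : (C 2 : MvPolynomial (Fin 2) ℤ) = 2 :=
    map_ofNat (C : ℤ →+* MvPolynomial (Fin 2) ℤ) 2
  rw [hC2] at hw
  linear_combination hw

private lemma lemA (p : MvPolynomial (Fin 2) ℤ) :
    ¬ ((X 0 : MvPolynomial (Fin 2) ℤ) ^ 2 - X 1 ^ 2 ∣ X 0 - X 1 - 2 * p) := by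
  rintro ⟨g, hg⟩
  have h2 : (2 : Polynomial (ZMod 2)) = 0 := by
    have : ((2:ℕ) : Polynomial (ZMod 2)) = Polynomial.C ((2:ℕ) : ZMod 2) := by
      rw [Polynomial.C_eq_natCast]
    norm_num at this
    rw [this, show (2 : ZMod 2) = 0 from rfl, map_zero]
  have key := congrArg (aeval (R := ℤ)
    (fun i : Fin 2 => if i = 0 then (Polynomial.X : Polynomial (ZMod 2)) else 0)) hg
  simp only [map_sub, map_mul, map_pow, map_ofNat, aeval_X] at key
  rw [h2, zero_mul, sub_zero] at key
  norm_num at key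
  -- key : Polynomial.X = Polynomial.X ^ 2 * aeval _ g
  have hgne : (aeval (R := ℤ)
      (fun i : Fin 2 => if i = 0 then (Polynomial.X : Polynomial (ZMod 2)) else 0)) g ≠ 0 := by
    intro h0
    rw [h0, mul_zero] at key
    exact Polynomial.X_ne_zero key
  have hdeg := congrArg Polynomial.natDegree key
  rw [Polynomial.natDegree_X, Polynomial.natDegree_mul (pow_ne_zero 2 Polynomial.X_ne_zero) hgne,
    Polynomial.natDegree_X_pow] at hdeg
  omega


set_option maxHeartbeats 1000000 in
set_option synthInstance.maxHeartbeats 200000 in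
/-- the commutative rings `ℤ[u,y]/⟨u² - y²⟩` and `ℤ[u,v]/⟨uv⟩` are not
isomorphic. (These are the `S¹`-equivariant cohomology rings of `ℂP¹ = SU(2)/T` and
`ℂP¹ = SO(3)/T` with their respective torus actions.) -/
theorem quotient_u2_sub_y2_not_iso_quotient_uv :
    IsEmpty
      ((MvPolynomial (Fin 2) ℤ ⧸
          Ideal.span {(X 0 : MvPolynomial (Fin 2) ℤ) ^ 2 - (X 1) ^ 2}) ≃+*
        (MvPolynomial (Fin 2) ℤ ⧸
          Ideal.span {(X 0 : MvPolynomial (Fin 2) ℤ) * X 1})) := by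
  constructor
  intro e
  let I₁ : Ideal (MvPolynomial (Fin 2) ℤ) := Ideal.span {X 0 ^ 2 - X 1 ^ 2}
  let I₂ : Ideal (MvPolynomial (Fin 2) ℤ) := Ideal.span {X 0 * X 1}
  let mk₁ : MvPolynomial (Fin 2) ℤ →+* MvPolynomial (Fin 2) ℤ ⧸ I₁ := Ideal.Quotient.mk I₁
  let mk₂ : MvPolynomial (Fin 2) ℤ →+* MvPolynomial (Fin 2) ℤ ⧸ I₂ := Ideal.Quotient.mk I₂
  have key1 : (e (mk₁ (X 0 - X 1))) ^ 2 = 2 * e (mk₁ (X 1 ^ 2 - X 0 * X 1)) := by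
    have hmem : ((X 0 : MvPolynomial (Fin 2) ℤ) - X 1) ^ 2 - 2 * (X 1 ^ 2 - X 0 * X 1) ∈ I₁ := by
      have h : ((X 0 : MvPolynomial (Fin 2) ℤ) - X 1) ^ 2 - 2 * (X 1 ^ 2 - X 0 * X 1)
          = X 0 ^ 2 - X 1 ^ 2 := by ring
      rw [h]
      exact Ideal.subset_span rfl
    have heq : mk₁ (((X 0 : MvPolynomial (Fin 2) ℤ) - X 1) ^ 2)
        = mk₁ (2 * (X 1 ^ 2 - X 0 * X 1)) := Ideal.Quotient.eq.mpr hmem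
    calc (e (mk₁ (X 0 - X 1))) ^ 2
        = e (mk₁ (((X 0 : MvPolynomial (Fin 2) ℤ) - X 1) ^ 2)) := by
          rw [map_pow, map_pow]
      _ = e (mk₁ (2 * (X 1 ^ 2 - X 0 * X 1))) := by rw [heq]
      _ = 2 * e (mk₁ (X 1 ^ 2 - X 0 * X 1)) := by
          rw [map_mul, map_mul, map_ofNat, map_ofNat]
  obtain ⟨q, hq⟩ := Ideal.Quotient.mk_surjective (I := I₂) (e (mk₁ (X 1 ^ 2 - X 0 * X 1)))
  obtain ⟨p, hp⟩ := Ideal.Quotient.mk_surjective (I := I₂) (e (mk₁ (X 0 - X 1)))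
  have hmem2 : p ^ 2 - 2 * q ∈ I₂ := by
    rw [← Ideal.Quotient.eq_zero_iff_mem]
    show mk₂ (p ^ 2 - 2 * q) = 0
    rw [map_sub, map_pow, map_mul, map_ofNat]
    show (mk₂ p) ^ 2 - 2 * (mk₂ q) = 0
    rw [hp, hq, key1, sub_self]
  have hdvd : (X 0 : MvPolynomial (Fin 2) ℤ) * X 1 ∣ p ^ 2 - 2 * q :=
    (Ideal.mem_span_singleton).mp hmem2
  obtain ⟨w, t, hwt⟩ := lemB p q hdvd
  have ha2 : e (mk₁ (X 0 - X 1)) = 2 * mk₂ w := by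
    rw [← hp, hwt]
    show mk₂ (2 * w + X 0 * X 1 * t) = 2 * mk₂ w
    rw [map_add, map_mul, map_mul, map_ofNat]
    have hz : mk₂ ((X 0 : MvPolynomial (Fin 2) ℤ) * X 1) = 0 := by
      rw [Ideal.Quotient.eq_zero_iff_mem]
      exact Ideal.subset_span rfl
    rw [hz, zero_mul, add_zero]
  have hsymm : mk₁ ((X 0 : MvPolynomial (Fin 2) ℤ) - X 1) = 2 * e.symm (mk₂ w) := by
    have h := congrArg e.symm ha2
    rw [RingEquiv.symm_apply_apply, map_mul, map_ofNat] at h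
    exact h
  obtain ⟨p', hp'⟩ := Ideal.Quotient.mk_surjective (I := I₁) (e.symm (mk₂ w))
  have hmem1 : (X 0 : MvPolynomial (Fin 2) ℤ) - X 1 - 2 * p' ∈ I₁ := by
    rw [← Ideal.Quotient.eq_zero_iff_mem]
    show mk₁ (X 0 - X 1 - 2 * p') = 0
    rw [map_sub, map_mul, map_ofNat]
    show mk₁ (X 0 - X 1) - 2 * (mk₁ p') = 0
    rw [hp', hsymm, sub_self]
  exact lemA p' ((Ideal.mem_span_singleton).mp hmem1)
end
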